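/- Let G(x) = g(x) + 6·L(x)⁴·(1 − L(x)⁴). Then G has exactly three real zeros: r₁ = x⁻ (the unique real root of g), and two further zeros r₂ and r₃ with r₂ ∈ (0.588, 0.589) and r₃ ∈ (0.877, 0.878); in particular both r₂ and r₃ lie in the open interval (0, 1). -/

import Mathlib

/-- The cubic `g(x) = 3x - x³ - 3`. -/
noncomputable def gcub (x : ℝ) : ℝ := 3 * x - x ^ 3 - 3

/-- The piecewise linear function `L`. -/
noncomputable def Lpl (x : ℝ) : ℝ := if x ≤ -1 then 0 else if x < 1 then (x + 1) / 2 else 1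

/-!
On `[-1, 1]` we have `L x = (x + 1) / 2`, so `G` is the polynomial
`Gpoly x = g x + 3/8 (x+1)⁴ - 3/128 (x+1)⁸`, whose derivative factors as `3 t q(t)` with
`t = x + 1` and `q(t) = 2 - t + t²/2 - t⁶/16` strictly decreasing for `t ≥ 0`. Hence `G`
increases and then decreases on `[-1, 1]`; numerical sign checks place exactly one zero on each
branch, in `(0.588, 0.589)` and `(0.877, 0.878)`. Outside `(-1, 1)` the bump `L⁴(1 - L⁴)`
vanishes, so there `G = g`, and `g < 0` on `[-1, ∞)` since `-g x = (x - 1)²(x + 2) + 1`.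
-/

open Set

noncomputable def Gpoly (x : ℝ) : ℝ := gcub x + 3 / 8 * (x + 1) ^ 4 - 3 / 128 * (x + 1) ^ 8

noncomputable def derivFactor (t : ℝ) : ℝ := 2 - t + t ^ 2 / 2 - t ^ 6 / 16

lemma gcub_neg_of_neg_one_le {x : ℝ} (hx : -1 ≤ x) : gcub x < 0 := by
  unfold gcub
  nlinarith [mul_nonneg (sq_nonneg (x - 1)) (by linarith : (0 : ℝ) ≤ x + 2)]

lemma Lpl_of_mem_Icc {x : ℝ} (hx : x ∈ Icc (-1) 1) : Lpl x = (x + 1) / 2 := by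
  unfold Lpl
  split_ifs with h₁ h₂
  · linarith [hx.1]
  · rfl
  · linarith [hx.2, not_lt.mp h₂]

lemma Lpl_eq_zero_or_eq_one {x : ℝ} (hx : x ∉ Ioo (-1) 1) : Lpl x = 0 ∨ Lpl x = 1 := by
  unfold Lpl
  split_ifs with h₁ h₂
  · exact .inl rfl
  · exact absurd ⟨not_le.mp h₁, h₂⟩ hx
  · exact .inr rfl

lemma gcub_add_bump_of_mem_Icc {x : ℝ} (hx : x ∈ Icc (-1) 1) :
    gcub x + 6 * Lpl x ^ 4 * (1 - Lpl x ^ 4) = Gpoly x := by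
  rw [Lpl_of_mem_Icc hx, Gpoly]
  ring

lemma hasDerivAt_derivFactor (t : ℝ) : HasDerivAt derivFactor (-1 + t - 3 / 8 * t ^ 5) t := by
  have := (((hasDerivAt_id' t).const_sub 2).add ((hasDerivAt_pow 2 t).div_const 2)).sub
    ((hasDerivAt_pow 6 t).div_const 16)
  exact this.congr_deriv (by norm_num; ring)

lemma derivFactor_strictAntiOn : StrictAntiOn derivFactor (Ici 0) := by
  refine strictAntiOn_of_deriv_neg (convex_Ici 0)
    (fun t _ ↦ (hasDerivAt_derivFactor t).continuousAt.continuousWithinAt) fun t ht ↦ ?_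
  rw [interior_Ici, mem_Ioi] at ht
  rw [(hasDerivAt_derivFactor t).deriv]
  nlinarith [pow_pos ht 5, sq_nonneg (t - 1), sq_nonneg (t ^ 2 - 1), pow_nonneg ht.le 3]

lemma hasDerivAt_Gpoly (x : ℝ) : HasDerivAt Gpoly (3 * (x + 1) * derivFactor (x + 1)) x := by
  have hx1 := (hasDerivAt_id' x).add_const 1
  have := ((((hasDerivAt_id' x).const_mul 3).sub (hasDerivAt_pow 3 x)).sub_const 3).add
    ((hx1.pow 4).const_mul (3 / 8)) |>.sub ((hx1.pow 8).const_mul (3 / 128))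
  exact this.congr_deriv (by norm_num [derivFactor]; ring)

lemma continuous_Gpoly : Continuous Gpoly := by
  unfold Gpoly gcub; fun_prop

lemma Gpoly_strictMonoOn {a b : ℝ} (ha : -1 ≤ a) (hb : 0 ≤ derivFactor (b + 1)) :
    StrictMonoOn Gpoly (Icc a b) := by
  refine strictMonoOn_of_deriv_pos (convex_Icc a b) continuous_Gpoly.continuousOn fun x hx ↦ ?_
  rw [interior_Icc] at hx
  rw [(hasDerivAt_Gpoly x).deriv]
  have hx1 : 0 < x + 1 := by linarith [hx.1]
  have : derivFactor (b + 1) < derivFactor (x + 1) :=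
    derivFactor_strictAntiOn hx1.le (mem_Ici.2 (by linarith [hx.2])) (by linarith [hx.2])
  nlinarith

lemma Gpoly_strictAntiOn {a b : ℝ} (ha : -1 ≤ a) (ha' : derivFactor (a + 1) ≤ 0) :
    StrictAntiOn Gpoly (Icc a b) := by
  refine strictAntiOn_of_deriv_neg (convex_Icc a b) continuous_Gpoly.continuousOn fun x hx ↦ ?_
  rw [interior_Icc] at hx
  rw [(hasDerivAt_Gpoly x).deriv]
  have hx1 : 0 < x + 1 := by linarith [hx.1]
  have : derivFactor (x + 1) < derivFactor (a + 1) :=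
    derivFactor_strictAntiOn (mem_Ici.2 (by linarith)) hx1.le (by linarith [hx.1])
  nlinarith

lemma Gpoly_pos_of_mem_Icc {z : ℝ} (hz : z ∈ Icc 0.589 0.877) : 0 < Gpoly z := by
  rcases le_total 0 (derivFactor (z + 1)) with h | h
  · calc 0 < Gpoly 0.589 := by norm_num [Gpoly, gcub]
      _ ≤ Gpoly z := (Gpoly_strictMonoOn (by norm_num) h).monotoneOn
          ⟨le_rfl, hz.1⟩ ⟨hz.1, le_rfl⟩ hz.1
  · calc 0 < Gpoly 0.877 := by norm_num [Gpoly, gcub]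
      _ ≤ Gpoly z := (Gpoly_strictAntiOn (by linarith [hz.1]) h).antitoneOn
          ⟨le_rfl, hz.2⟩ ⟨hz.2, le_rfl⟩ hz.2

lemma exists_zeros_Gpoly : ∃ r2 r3 : ℝ,
    (0.588 < r2 ∧ r2 < 0.589) ∧ (0.877 < r3 ∧ r3 < 0.878) ∧ Gpoly r2 = 0 ∧ Gpoly r3 = 0 ∧
      ∀ z ∈ Icc (-1) 1, Gpoly z = 0 → z = r2 ∨ z = r3 := by
  obtain ⟨r2, hr2, hGr2⟩ := intermediate_value_Ioo (by norm_num : (0.588 : ℝ) ≤ 0.589)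
    continuous_Gpoly.continuousOn (show (0 : ℝ) ∈ Ioo _ _ by norm_num [Gpoly, gcub])
  obtain ⟨r3, hr3, hGr3⟩ := intermediate_value_Ioo' (by norm_num : (0.877 : ℝ) ≤ 0.878)
    continuous_Gpoly.continuousOn (show (0 : ℝ) ∈ Ioo _ _ by norm_num [Gpoly, gcub])
  have hmono : StrictMonoOn Gpoly (Icc (-1) 0.589) :=
    Gpoly_strictMonoOn le_rfl (by norm_num [derivFactor])
  have hanti : StrictAntiOn Gpoly (Icc 0.877 1) :=
    Gpoly_strictAntiOn (by norm_num) (by norm_num [derivFactor])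
  refine ⟨r2, r3, hr2, hr3, hGr2, hGr3, fun z hz hGz ↦ ?_⟩
  rcases le_or_gt z 0.589 with hz₁ | hz₁
  · exact .inl <| hmono.injOn ⟨hz.1, hz₁⟩ ⟨by linarith [hr2.1], hr2.2.le⟩ (hGz.trans hGr2.symm)
  rcases le_or_gt 0.877 z with hz₂ | hz₂
  · exact .inr <| hanti.injOn ⟨hz₂, hz.2⟩ ⟨hr3.1.le, by linarith [hr3.2]⟩ (hGz.trans hGr3.symm)
  exact absurd hGz (Gpoly_pos_of_mem_Icc ⟨hz₁.le, hz₂.le⟩).ne'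

/-- equation (19) of the paper: the function
`G(x) = g(x) + 6 L(x)⁴ (1 - L(x)⁴)` has exactly three real zeros:
`r₁ = x⁻` (the unique real root of `g`), `r₂ ∈ (0.588, 0.589)` and
`r₃ ∈ (0.877, 0.878)`; in particular `r₂, r₃ ∈ (0, 1)`. -/
theorem stmt_16 (xm : ℝ) (hxm : gcub xm = 0) (hxmu : ∀ z, gcub z = 0 → z = xm)
    (G : ℝ → ℝ) (hG : ∀ x, G x = gcub x + 6 * (Lpl x) ^ 4 * (1 - (Lpl x) ^ 4)) :
    ∃ r2 r3 : ℝ,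
      (0.588 < r2 ∧ r2 < 0.589) ∧ (0.877 < r3 ∧ r3 < 0.878) ∧
      (0 < r2 ∧ r2 < 1) ∧ (0 < r3 ∧ r3 < 1) ∧
      G xm = 0 ∧ G r2 = 0 ∧ G r3 = 0 ∧
      (∀ z : ℝ, G z = 0 → z = xm ∨ z = r2 ∨ z = r3) := by
  obtain ⟨r2, r3, hr2, hr3, hGr2, hGr3, hzeros⟩ := exists_zeros_Gpoly
  have hG_Icc : ∀ x ∈ Icc (-1) 1, G x = Gpoly x := fun x hx ↦ by
    rw [hG, gcub_add_bump_of_mem_Icc hx]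
  have hG_out : ∀ x ∉ Ioo (-1) 1, G x = gcub x := fun x hx ↦ by
    rcases Lpl_eq_zero_or_eq_one hx with h | h <;> simp [hG, h]
  have hxm_out : xm ∉ Ioo (-1) 1 := fun h ↦ (gcub_neg_of_neg_one_le h.1.le).ne hxm
  have hr2_mem : r2 ∈ Icc (-1) 1 := ⟨by linarith [hr2.1], by linarith [hr2.2]⟩
  have hr3_mem : r3 ∈ Icc (-1) 1 := ⟨by linarith [hr3.1], by linarith [hr3.2]⟩
  refine ⟨r2, r3, hr2, hr3, ⟨by linarith [hr2.1], by linarith [hr2.2]⟩,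
    ⟨by linarith [hr3.1], by linarith [hr3.2]⟩, by rw [hG_out xm hxm_out, hxm],
    by rw [hG_Icc r2 hr2_mem, hGr2], by rw [hG_Icc r3 hr3_mem, hGr3], fun z hz ↦ ?_⟩
  by_cases hzI : z ∈ Ioo (-1) 1
  · have hz_mem := Ioo_subset_Icc_self hzI
    exact .inr <| hzeros z hz_mem (by rwa [← hG_Icc z hz_mem])
  · exact .inl <| hxmu z (by rwa [← hG_out z hzI])
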